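/- (Integral representation of the inverse matrix square root.) Let P ∈ ℝ^{d×d} be symmetric positive definite. Then the Bochner integral ∫_{(0,∞)} t^{−1/2} exp(−tP) dt converges and equals √π times the positive semidefinite square root of P⁻¹: ∫₀^∞ t^{−1/2} exp(−tP) dt = √π · (P⁻¹)^{1/2}. -/

import Mathlib

open Matrix MeasureTheory
open scoped Matrix.Norms.L2Operator NNReal RealInnerProductSpace

/-- The ensemble mean `x̄ = (1/M) ∑ᵢ X⁽ⁱ⁾`. -/
noncomputable def ensMean {d M : ℕ} (X : Fin M → EuclideanSpace ℝ (Fin d)) :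
    EuclideanSpace ℝ (Fin d) :=
  (M : ℝ)⁻¹ • ∑ i, X i

/-- The matrix of ensemble deviations, with columns `X⁽ⁱ⁾ − x̄`. -/
noncomputable def devMat {d M : ℕ} (X : Fin M → EuclideanSpace ℝ (Fin d)) :
    Matrix (Fin d) (Fin M) ℝ :=
  Matrix.of fun j i => (X i - ensMean X) j

/-- The trace of the empirical covariance matrix,
`tr(P) = (1/(M−1)) ∑ᵢ ‖X⁽ⁱ⁾ − x̄‖²`. -/
noncomputable def trP {d M : ℕ} (X : Fin M → EuclideanSpace ℝ (Fin d)) : ℝ :=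
  ((M : ℝ) - 1)⁻¹ * ∑ i, ‖X i - ensMean X‖ ^ 2

open scoped ComplexOrder in
/-- The positive semidefinite square root of a positive semidefinite matrix
(the Mathlib definition of December 2024, since removed from Mathlib). -/
noncomputable def Matrix.PosSemidef.sqrt {n : Type*} [Fintype n] [DecidableEq n] {𝕜 : Type*}
    [RCLike 𝕜] {A : Matrix n n 𝕜} (hA : A.PosSemidef) : Matrix n n 𝕜 :=
  (hA.1.eigenvectorUnitary : Matrix n n 𝕜) *
    diagonal (fun i => ((Real.sqrt (hA.1.eigenvalues i) : ℝ) : 𝕜)) *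
    (star hA.1.eigenvectorUnitary : Matrix n n 𝕜)

/-!
Under the continuous functional calculus, `t^{-1/2} exp(-t a) = cfc (x ↦ t^{-1/2} e^{-tx}) a`.
By compactness the spectrum of a strictly positive `a` lies above some `r > 0`, so
`t^{-1/2} e^{-tr}` is an integrable majorant and integration commutes with the calculus; the Gamma
integral `∫₀^∞ t^{-1/2} e^{-tx} dt = √π x^{-1/2}` then gives `√π a^{-1/2} = √π (a⁻¹)^{1/2}`.
A positive definite matrix is strictly positive in the matrix algebra, whose functional calculus
is the eigendecomposition.
-/

open Real Set Function

lemma Real.inv_sqrt_eq_rpow_neg_half {t : ℝ} (ht : 0 ≤ t) : (√t)⁻¹ = t ^ (-(1 / 2) : ℝ) := by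
  rw [Real.sqrt_eq_rpow, ← Real.rpow_neg ht]

theorem Real.integrableOn_inv_sqrt_mul_exp_neg_mul {b : ℝ} (hb : 0 < b) :
    IntegrableOn (fun t : ℝ => (√t)⁻¹ * exp (-(t * b))) (Ioi 0) := by
  refine (integrableOn_rpow_mul_exp_neg_mul_rpow (s := -(1 / 2)) (by norm_num) one_pos hb)
    |>.congr_fun (fun t ht => ?_) measurableSet_Ioi
  simp only [Real.inv_sqrt_eq_rpow_neg_half (le_of_lt ht), Real.rpow_one, mul_comm t b, neg_mul]

theorem Real.integral_inv_sqrt_mul_exp_neg_mul {b : ℝ} (hb : 0 < b) :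
    ∫ t in Ioi (0 : ℝ), (√t)⁻¹ * exp (-(t * b)) = √π * (√b)⁻¹ := by
  have h := Real.integral_rpow_mul_exp_neg_mul_Ioi (a := 1 / 2) one_half_pos hb
  rw [Real.Gamma_one_half_eq, Real.div_rpow zero_le_one hb.le, Real.one_rpow,
    ← Real.sqrt_eq_rpow, mul_comm, one_div (√b)] at h
  rw [← h]
  refine setIntegral_congr_fun measurableSet_Ioi fun t ht => ?_
  norm_num [Real.inv_sqrt_eq_rpow_neg_half (le_of_lt ht), mul_comm t b]

theorem IsSelfAdjoint.exp_smul_eq_cfc {A : Type*} [NormedRing A] [StarRing A]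
    [NormedAlgebra ℝ A] [StarModule ℝ A] [ContinuousFunctionalCalculus ℝ A IsSelfAdjoint] {a : A}
    (ha : IsSelfAdjoint a) (t : ℝ) :
    NormedSpace.exp (t • a) = cfc (fun x => Real.exp (t * x)) a := by
  rw [← CFC.real_exp_eq_normedSpace_exp ((IsSelfAdjoint.all t).smul ha),
    cfc_comp_const_mul t Real.exp a]

theorem IsStrictlyPositive.exists_pos_le_of_mem_spectrum {A : Type*} [NormedRing A]
    [NormedAlgebra ℝ A] [CompleteSpace A] [PartialOrder A] [NonnegSpectrumClass ℝ A] {a : A}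
    (ha : IsStrictlyPositive a) : ∃ r > 0, ∀ x ∈ spectrum ℝ a, r ≤ x := by
  rcases (spectrum ℝ a).eq_empty_or_nonempty with h | h
  · exact ⟨1, one_pos, by simp [h]⟩
  · obtain ⟨r, hr, hmin⟩ := (spectrum.isCompact a).exists_isMinOn h continuousOn_id
    exact ⟨r, ha.spectrum_pos hr, hmin⟩

theorem IsStrictlyPositive.integrableOn_and_integral_inv_sqrt_smul_exp_neg_smul {A : Type*}
    [NormedRing A] [StarRing A] [NormedAlgebra ℝ A] [StarModule ℝ A] [CompleteSpace A]
    [PartialOrder A] [StarOrderedRing A] [ContinuousFunctionalCalculus ℝ A IsSelfAdjoint]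
    [NonnegSpectrumClass ℝ A] {a : A} (ha : IsStrictlyPositive a) :
    IntegrableOn (fun t : ℝ => (√t)⁻¹ • NormedSpace.exp (-(t • a))) (Ioi 0) ∧
      ∫ t in Ioi (0 : ℝ), (√t)⁻¹ • NormedSpace.exp (-(t • a)) =
        √π • CFC.sqrt (Ring.inverse a) := by
  set f : ℝ → ℝ → ℝ := fun t x => (√t)⁻¹ * exp (-(t * x))
  have hfa : (fun t : ℝ => (√t)⁻¹ • NormedSpace.exp (-(t • a))) = fun t => cfc (f t) a := by
    funext t
    rw [← neg_smul, IsSelfAdjoint.exp_smul_eq_cfc ha.isSelfAdjoint,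
      ← cfc_const_mul (√t)⁻¹ (fun x => exp (-t * x)) a]
    simp only [f, neg_mul]
  obtain ⟨r, hr, hr_le⟩ := ha.exists_pos_le_of_mem_spectrum
  have hcont : ContinuousOn (uncurry f) (Ioi 0 ×ˢ spectrum ℝ a) :=
    (continuous_fst.sqrt.continuousOn.inv₀ fun p hp => (Real.sqrt_pos.2 hp.1).ne').mul
      (by fun_prop)
  have hbound : ∀ᵐ t ∂(volume.restrict (Ioi 0)), ∀ x ∈ spectrum ℝ a, ‖f t x‖ ≤ f t r := by
    filter_upwards [ae_restrict_mem measurableSet_Ioi] with t ht x hx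
    dsimp only [f]
    rw [Real.norm_of_nonneg (by positivity)]
    gcongr
    exacts [le_of_lt ht, hr_le x hx]
  have hint := (Real.integrableOn_inv_sqrt_mul_exp_neg_mul hr).2
  refine ⟨hfa ▸ integrableOn_cfc measurableSet_Ioi f (f · r) a hcont hbound hint, ?_⟩
  rw [hfa, ← cfc_setIntegral measurableSet_Ioi f _ a hcont hbound hint]
  have hsqrt_ne : ∀ x ∈ spectrum ℝ a, √x ≠ 0 := fun x hx =>
    (Real.sqrt_pos.2 (ha.spectrum_pos hx)).ne'
  calc cfc (fun x => ∫ t in Ioi 0, f t x) a = cfc (fun x => √π * (√x)⁻¹) a :=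
        cfc_congr fun x hx => Real.integral_inv_sqrt_mul_exp_neg_mul (ha.spectrum_pos hx)
    _ = √π • Ring.inverse (cfc Real.sqrt a) := by
        rw [cfc_const_mul √π (fun x => (√x)⁻¹) a
          (Real.continuous_sqrt.continuousOn.inv₀ hsqrt_ne), cfc_inv _ a hsqrt_ne]
    _ = √π • CFC.sqrt (Ring.inverse a) := by
        rw [CFC.sqrt_ringInverse, CFC.sqrt_eq_real_sqrt a ha.nonneg, cfcₙ_eq_cfc]

open scoped MatrixOrder ComplexOrder in
theorem Matrix.PosSemidef.sqrt_eq_cfcSqrt {n 𝕜 : Type*} [Fintype n] [DecidableEq n] [RCLike 𝕜]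
    {A : Matrix n n 𝕜} (hA : A.PosSemidef) : hA.sqrt = CFC.sqrt A := by
  rw [CFC.sqrt_eq_real_sqrt A hA.nonneg, cfcₙ_eq_cfc, hA.1.cfc_eq]
  simp [Matrix.PosSemidef.sqrt, Matrix.IsHermitian.cfc, Function.comp_def,
    Unitary.conjStarAlgAut_apply]

/-- integral representation of the inverse matrix square root:
for `P` symmetric positive definite, `∫₀^∞ t^{−1/2} exp(−tP) dt` converges (as a Bochner
integral) and equals `√π · (P⁻¹)^{1/2}`. -/
theorem integral_rpow_neg_half_exp_eq_sqrt_pi_smul_sqrt_inv {d : ℕ}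
    (P : Matrix (Fin d) (Fin d) ℝ) (hP : P.PosDef) :
    IntegrableOn (fun t : ℝ => (Real.sqrt t)⁻¹ • NormedSpace.exp (-(t • P)))
      (Set.Ioi 0) volume ∧
    ∫ t in Set.Ioi (0 : ℝ), (Real.sqrt t)⁻¹ • NormedSpace.exp (-(t • P)) =
      Real.sqrt Real.pi • hP.inv.posSemidef.sqrt := by
  open scoped MatrixOrder in
  rw [hP.inv.posSemidef.sqrt_eq_cfcSqrt, nonsing_inv_eq_ringInverse]
  exact hP.isStrictlyPositive.integrableOn_and_integral_inv_sqrt_smul_exp_neg_smul
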